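/- For every formula ξ ∈ L_NF, if G ⊢ ξ then HilbP ⊢ pari(ξ), where pari : L_Full → L_Par replaces demonic operations by duals of angelic ones. -/

import Mathlib

/-! Normal-form game logic: syntax -/

mutual
inductive GLForm : Type where
  | atom  : ℕ → GLForm
  | natom : ℕ → GLForm
  | or    : GLForm → GLForm → GLForm
  | and   : GLForm → GLForm → GLForm
  | dia   : GLGame → GLForm → GLForm
inductive GLGame : Type where
  | atg   : ℕ → GLGame
  | atgd  : ℕ → GLGame
  | comp  : GLGame → GLGame → GLGame
  | cha   : GLGame → GLGame → GLGame
  | chd   : GLGame → GLGame → GLGame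
  | star  : GLGame → GLGame
  | cross : GLGame → GLGame
  | test  : GLForm → GLGame
  | dtest : GLForm → GLGame
end

noncomputable instance : DecidableEq GLForm := Classical.decEq _
noncomputable instance : DecidableEq GLGame := Classical.decEq _

/-! Complementation (negation normal form negation) and dual games. -/

mutual
def GLForm.compl : GLForm → GLForm
  | .atom p  => .natom p
  | .natom p => .atom p
  | .or φ ψ  => .and (GLForm.compl φ) (GLForm.compl ψ)
  | .and φ ψ => .or (GLForm.compl φ) (GLForm.compl ψ)
  | .dia γ φ => .dia (GLGame.dual γ) (GLForm.compl φ)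
def GLGame.dual : GLGame → GLGame
  | .atg g  => .atgd g
  | .atgd g => .atg g
  | .comp γ δ => .comp (GLGame.dual γ) (GLGame.dual δ)
  | .cha γ δ  => .chd (GLGame.dual γ) (GLGame.dual δ)
  | .chd γ δ  => .cha (GLGame.dual γ) (GLGame.dual δ)
  | .star γ  => .cross (GLGame.dual γ)
  | .cross γ => .star (GLGame.dual γ)
  | .test φ  => .dtest (GLForm.compl φ)
  | .dtest φ => .test (GLForm.compl φ)
end

/-! Formula contexts for game logic: a context is a formula (resp. game) with a
    unique occurrence of a hole, which sits either in formula position or in game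
    position.  `fill` substitutes the hole. -/

mutual
/-- Formula context with a unique formula-position hole. -/
inductive FCtxF : Type where
  | hole : FCtxF
  | orL  : FCtxF → GLForm → FCtxF
  | orR  : GLForm → FCtxF → FCtxF
  | andL : FCtxF → GLForm → FCtxF
  | andR : GLForm → FCtxF → FCtxF
  | diaG : GCtxF → GLForm → FCtxF
  | diaF : GLGame → FCtxF → FCtxF
/-- Game context with a unique formula-position hole. -/
inductive GCtxF : Type where
  | compL : GCtxF → GLGame → GCtxF
  | compR : GLGame → GCtxF → GCtxF
  | chaL  : GCtxF → GLGame → GCtxF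
  | chaR  : GLGame → GCtxF → GCtxF
  | chdL  : GCtxF → GLGame → GCtxF
  | chdR  : GLGame → GCtxF → GCtxF
  | star  : GCtxF → GCtxF
  | cross : GCtxF → GCtxF
  | test  : FCtxF → GCtxF
  | dtest : FCtxF → GCtxF
end

mutual
/-- Formula context with a unique game-position hole. -/
inductive FCtxG : Type where
  | orL  : FCtxG → GLForm → FCtxG
  | orR  : GLForm → FCtxG → FCtxG
  | andL : FCtxG → GLForm → FCtxG
  | andR : GLForm → FCtxG → FCtxG
  | diaG : GCtxG → GLForm → FCtxG
  | diaF : GLGame → FCtxG → FCtxG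
/-- Game context with a unique game-position hole. -/
inductive GCtxG : Type where
  | hole  : GCtxG
  | compL : GCtxG → GLGame → GCtxG
  | compR : GLGame → GCtxG → GCtxG
  | chaL  : GCtxG → GLGame → GCtxG
  | chaR  : GLGame → GCtxG → GCtxG
  | chdL  : GCtxG → GLGame → GCtxG
  | chdR  : GLGame → GCtxG → GCtxG
  | star  : GCtxG → GCtxG
  | cross : GCtxG → GCtxG
  | test  : FCtxG → GCtxG
  | dtest : FCtxG → GCtxG
end

mutual
def FCtxF.fill : FCtxF → GLForm → GLForm
  | .hole, χ => χ
  | .orL c ψ, χ => .or (FCtxF.fill c χ) ψ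
  | .orR φ c, χ => .or φ (FCtxF.fill c χ)
  | .andL c ψ, χ => .and (FCtxF.fill c χ) ψ
  | .andR φ c, χ => .and φ (FCtxF.fill c χ)
  | .diaG c φ, χ => .dia (GCtxF.fill c χ) φ
  | .diaF γ c, χ => .dia γ (FCtxF.fill c χ)
def GCtxF.fill : GCtxF → GLForm → GLGame
  | .compL c δ, χ => .comp (GCtxF.fill c χ) δ
  | .compR γ c, χ => .comp γ (GCtxF.fill c χ)
  | .chaL c δ, χ => .cha (GCtxF.fill c χ) δ
  | .chaR γ c, χ => .cha γ (GCtxF.fill c χ)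
  | .chdL c δ, χ => .chd (GCtxF.fill c χ) δ
  | .chdR γ c, χ => .chd γ (GCtxF.fill c χ)
  | .star c, χ => .star (GCtxF.fill c χ)
  | .cross c, χ => .cross (GCtxF.fill c χ)
  | .test c, χ => .test (FCtxF.fill c χ)
  | .dtest c, χ => .dtest (FCtxF.fill c χ)
end

mutual
def FCtxG.fillG : FCtxG → GLGame → GLForm
  | .orL c ψ, δ => .or (FCtxG.fillG c δ) ψ
  | .orR φ c, δ => .or φ (FCtxG.fillG c δ)
  | .andL c ψ, δ => .and (FCtxG.fillG c δ) ψ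
  | .andR φ c, δ => .and φ (FCtxG.fillG c δ)
  | .diaG c φ, δ => .dia (GCtxG.fillG c δ) φ
  | .diaF γ c, δ => .dia γ (FCtxG.fillG c δ)
def GCtxG.fillG : GCtxG → GLGame → GLGame
  | .hole, δ => δ
  | .compL c δ', δ => .comp (GCtxG.fillG c δ) δ'
  | .compR γ c, δ => .comp γ (GCtxG.fillG c δ)
  | .chaL c δ', δ => .cha (GCtxG.fillG c δ) δ'
  | .chaR γ c, δ => .cha γ (GCtxG.fillG c δ)
  | .chdL c δ', δ => .chd (GCtxG.fillG c δ) δ'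
  | .chdR γ c, δ => .chd γ (GCtxG.fillG c δ)
  | .star c, δ => .star (GCtxG.fillG c δ)
  | .cross c, δ => .cross (GCtxG.fillG c δ)
  | .test c, δ => .test (FCtxG.fillG c δ)
  | .dtest c, δ => .dtest (FCtxG.fillG c δ)
end

/-! The cut-free sequent calculus G for game logic.  A sequent is a finite set
    of normal-form formulas, read disjunctively. -/

abbrev GLSeq := Finset GLForm

/-- Conjunction of a list of formulas (an arbitrary tautologous formula for the
    empty list). -/
def listAnd : List GLForm → GLForm
  | [] => .or (.atom 0) (.natom 0)
  | [φ] => φ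
  | φ :: ψ :: rest => .and φ (listAnd (ψ :: rest))

/-- `Φ̄`: the conjunction of the complements of the members of `Φ`. -/
noncomputable def seqCompl (Φ : GLSeq) : GLForm := listAnd (Φ.toList.map GLForm.compl)

/-- The sequent calculus `G`. -/
inductive GDer : GLSeq → Prop
  /-- axiom `Φ, Φ̄` -/
  | ax (Φ : GLSeq) : GDer (insert (seqCompl Φ) Φ)
  /-- weakening -/
  | weak {Φ} (φ) : GDer Φ → GDer (insert φ Φ)
  /-- monotone modal rule -/
  | modm {φ ψ g} : GDer {φ, ψ} → GDer {.dia (.atg g) φ, .dia (.atgd g) ψ}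
  /-- disjunction -/
  | orR {Φ φ ψ} : GDer (insert φ (insert ψ Φ)) → GDer (insert (.or φ ψ) Φ)
  /-- conjunction -/
  | andR {Φ φ ψ} : GDer (insert φ Φ) → GDer (insert ψ Φ) → GDer (insert (.and φ ψ) Φ)
  /-- angelic iteration -/
  | starR {Φ γ φ} : GDer (insert (.or φ (.dia γ (.dia (.star γ) φ))) Φ) →
      GDer (insert (.dia (.star γ) φ) Φ)
  /-- demonic iteration -/
  | crossR {Φ γ φ} : GDer (insert (.and φ (.dia γ (.dia (.cross γ) φ))) Φ) →
      GDer (insert (.dia (.cross γ) φ) Φ)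
  /-- angelic choice -/
  | chaR {Φ γ δ φ} : GDer (insert (.or (.dia γ φ) (.dia δ φ)) Φ) →
      GDer (insert (.dia (.cha γ δ) φ) Φ)
  /-- demonic choice -/
  | chdR {Φ γ δ φ} : GDer (insert (.and (.dia γ φ) (.dia δ φ)) Φ) →
      GDer (insert (.dia (.chd γ δ) φ) Φ)
  /-- angelic test -/
  | testR {Φ ψ φ} : GDer (insert (.and ψ φ) Φ) → GDer (insert (.dia (.test ψ) φ) Φ)
  /-- demonic test -/
  | dtestR {Φ ψ φ} : GDer (insert (.or ψ φ) Φ) → GDer (insert (.dia (.dtest ψ) φ) Φ)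
  /-- deep monotonicity rule for games: from `Φ, ψ(γ)` derive `Φ, ψ(χ! ; γ)` -/
  | monGd {Φ χ γ} (c : FCtxG) : GDer (insert (c.fillG γ) Φ) →
      GDer (insert (c.fillG (.comp (.dtest χ) γ)) Φ)
  /-- deep monotonicity rule for formulas: from `Φ, ψ(φ)` derive `Φ, ψ(⟨χ!⟩φ)` -/
  | monFd {Φ χ φ} (c : FCtxF) : GDer (insert (c.fill φ) Φ) →
      GDer (insert (c.fill (.dia (.dtest χ) φ)) Φ)
  /-- deep composition rule -/
  | compd {Φ γ δ φ} (c : FCtxF) : GDer (insert (c.fill (.dia γ (.dia δ φ))) Φ) →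
      GDer (insert (c.fill (.dia (.comp γ δ) φ)) Φ)
  /-- strengthened induction rule: from `Φ, φ ∧ ⟨γ⟩⟨(Φ̄! ; γ)×⟩⟨Φ̄!⟩φ` derive `Φ, ⟨γ×⟩φ` -/
  | inds {Φ γ φ} :
      GDer (insert (.and φ (.dia γ (.dia (.cross (.comp (.dtest (seqCompl Φ)) γ))
              (.dia (.dtest (seqCompl Φ)) φ)))) Φ) →
      GDer (insert (.dia (.cross γ) φ) Φ)

/-! Parikh's language of game logic: syntax, abbreviations, propositional
    tautologies, and Parikh's Hilbert system HilbP. -/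

mutual
inductive ParForm : Type where
  | atom : ℕ → ParForm
  | neg  : ParForm → ParForm
  | or   : ParForm → ParForm → ParForm
  | dia  : ParGame → ParForm → ParForm
inductive ParGame : Type where
  | atg  : ℕ → ParGame
  | comp : ParGame → ParGame → ParGame
  | cha  : ParGame → ParGame → ParGame
  | star : ParGame → ParGame
  | dual : ParGame → ParGame
  | test : ParForm → ParGame
end

/-- Implication, as the usual abbreviation. -/
def pimp (φ ψ : ParForm) : ParForm := .or (.neg φ) ψ
/-- Conjunction, as the usual abbreviation. -/
def pand (φ ψ : ParForm) : ParForm := .neg (.or (.neg φ) (.neg ψ))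
/-- Bi-implication, as the usual abbreviation. -/
def piff (φ ψ : ParForm) : ParForm := pand (pimp φ ψ) (pimp ψ φ)

/-- Propositional evaluation of a formula relative to an arbitrary assignment of
    truth values to its non-Boolean components. -/
def peval (v : ParForm → Prop) : ParForm → Prop
  | .atom p  => v (.atom p)
  | .neg φ   => ¬ peval v φ
  | .or φ ψ  => peval v φ ∨ peval v ψ
  | .dia γ φ => v (.dia γ φ)

/-- `φ` is (a substitution instance of) a propositional tautology. -/
def PTaut (φ : ParForm) : Prop := ∀ v, peval v φ

/-- Parikh's Hilbert system for game logic. -/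
inductive HilbP : ParForm → Prop
  | taut {φ} : PTaut φ → HilbP φ
  | axComp {γ δ φ} : HilbP (piff (.dia (.comp γ δ) φ) (.dia γ (.dia δ φ)))
  | axCha {γ δ φ} : HilbP (piff (.dia (.cha γ δ) φ) (.or (.dia γ φ) (.dia δ φ)))
  | axStar {γ φ} : HilbP (piff (.dia (.star γ) φ) (.or φ (.dia γ (.dia (.star γ) φ))))
  | axTest {ψ φ} : HilbP (piff (.dia (.test ψ) φ) (pand ψ φ))
  | axDual {γ φ} : HilbP (piff (.dia (.dual γ) φ) (.neg (.dia γ (.neg φ))))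
  | mp {φ ψ} : HilbP φ → HilbP (pimp φ ψ) → HilbP ψ
  | mon {φ ψ} (γ) : HilbP (pimp φ ψ) → HilbP (pimp (.dia γ φ) (.dia γ ψ))
  | barInd {γ φ} : HilbP (pimp (.dia γ φ) φ) → HilbP (pimp (.dia (.star γ) φ) φ)

/-! The translation `pari` restricted to the normal-form language (viewed inside
    the full language): it replaces demonic operations by duals of angelic ones. -/

mutual
def pariNF : GLForm → ParForm
  | .atom p  => .atom p
  | .natom p => .neg (.atom p)
  | .or φ ψ  => .or (pariNF φ) (pariNF ψ)
  | .and φ ψ => .neg (.or (.neg (pariNF φ)) (.neg (pariNF ψ)))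
  | .dia γ φ => .dia (pariNFG γ) (pariNF φ)
def pariNFG : GLGame → ParGame
  | .atg g  => .atg g
  | .atgd g => .dual (.atg g)
  | .comp γ δ => .comp (pariNFG γ) (pariNFG δ)
  | .cha γ δ  => .cha (pariNFG γ) (pariNFG δ)
  | .chd γ δ  => .dual (.cha (.dual (pariNFG γ)) (.dual (pariNFG δ)))
  | .star γ  => .star (pariNFG γ)
  | .cross γ => .dual (.star (.dual (pariNFG γ)))
  | .test φ  => .test (pariNF φ)
  | .dtest φ => .dual (.test (.neg (pariNF φ)))
end


/-! By induction on `G`-derivations, the translation `pariSeq Φ` of a derivable sequent, the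
disjunction of the translations of its members, is provable in `HilbP`. Two facts about Parikh's
system carry the routine rules: `pari` commutes with complement and dual up to provable equivalence
(so the translated axiom `Φ, Φ̄` is an excluded middle), and every game operator, including the
translations of the demonic ones, is monotone for provable inclusion `⟨α⟩φ → ⟨β⟩φ` (so the deep
rules, which only enlarge a subformula or subgame, are sound). Strengthened induction is the one
rule with content: reading `Φ, ⟨γ×⟩φ` as `pari(Φ̄) → ⟨γ×⟩φ`, it is an instance of coinduction for
`×`, which in Parikh's language is bar induction for the dual iteration. -/

@[simp] lemma peval_pimp {v : ParForm → Prop} {φ ψ : ParForm} :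
    peval v (pimp φ ψ) ↔ (peval v φ → peval v ψ) := by
  simp only [pimp, peval, imp_iff_not_or]

@[simp] lemma peval_pand {v : ParForm → Prop} {φ ψ : ParForm} :
    peval v (pand φ ψ) ↔ peval v φ ∧ peval v ψ := by
  simp only [pand, peval, not_or, not_not]

@[simp] lemma peval_piff {v : ParForm → Prop} {φ ψ : ParForm} :
    peval v (piff φ ψ) ↔ (peval v φ ↔ peval v ψ) := by
  simp only [piff, peval_pand, peval_pimp, iff_def]

namespace HilbP

variable {φ ψ : ParForm}

lemma of_entails (h : HilbP φ) (hφψ : ∀ v, peval v φ → peval v ψ) : HilbP ψ :=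
  h.mp (taut fun v => peval_pimp.2 (hφψ v))

lemma and_intro (hφ : HilbP φ) (hψ : HilbP ψ) : HilbP (pand φ ψ) :=
  hψ.mp (hφ.mp (taut fun v => by simp only [peval_pimp, peval_pand]; exact And.intro))

lemma piff_mp (h : HilbP (piff φ ψ)) : HilbP (pimp φ ψ) :=
  h.of_entails fun v h => by simp_all

lemma piff_mpr (h : HilbP (piff φ ψ)) : HilbP (pimp ψ φ) :=
  h.of_entails fun v h => by simp_all

lemma dia_congr (γ : ParGame) (h : HilbP (piff φ ψ)) :
    HilbP (piff (.dia γ φ) (.dia γ ψ)) :=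
  ((mon γ h.piff_mp).and_intro (mon γ h.piff_mpr)).of_entails fun v h => by
    simp only [peval_pand, peval_pimp, peval_piff] at h ⊢; exact ⟨h.1, h.2⟩

lemma dia_neg_neg (γ : ParGame) (φ : ParForm) :
    HilbP (piff (.dia γ (.neg (.neg φ))) (.dia γ φ)) :=
  dia_congr γ (taut fun v => by simp [peval])

end HilbP

def GameLE (α β : ParGame) : Prop := ∀ φ, HilbP (pimp (.dia α φ) (.dia β φ))

namespace GameLE

variable {α β γ α' β' : ParGame}

lemma refl (α : ParGame) : GameLE α α := fun _ => HilbP.taut fun v => by simp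

lemma trans (h₁ : GameLE α β) (h₂ : GameLE β γ) : GameLE α γ := fun φ =>
  ((h₁ φ).and_intro (h₂ φ)).of_entails fun v h => by simp_all

lemma comp (h : GameLE α β) (h' : GameLE α' β') : GameLE (.comp α α') (.comp β β') := by
  intro φ
  have step : HilbP (pimp (.dia α (.dia α' φ)) (.dia β (.dia β' φ))) :=
    ((HilbP.mon α (h' φ)).and_intro (h (.dia β' φ))).of_entails fun v h => by simp_all
  exact ((HilbP.axComp (γ := α) (δ := α') (φ := φ)).and_intro <|
    step.and_intro (HilbP.axComp (γ := β) (δ := β') (φ := φ))).of_entails fun v h => by simp_all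

lemma cha (h : GameLE α β) (h' : GameLE α' β') : GameLE (.cha α α') (.cha β β') := fun φ =>
  ((HilbP.axCha (γ := α) (δ := α') (φ := φ)).and_intro <| (h φ).and_intro <|
    (h' φ).and_intro (HilbP.axCha (γ := β) (δ := β') (φ := φ))).of_entails fun v h => by
      simp only [peval_pand, peval_pimp, peval_piff, peval] at h ⊢; tauto

lemma dual (h : GameLE α β) : GameLE (.dual β) (.dual α) := fun φ =>
  ((HilbP.axDual (γ := α) (φ := φ)).and_intro <| (h (.neg φ)).and_intro
    (HilbP.axDual (γ := β) (φ := φ))).of_entails fun v h => by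
      simp only [peval_pand, peval_pimp, peval_piff, peval] at h ⊢; tauto

/-- Bar induction applied to `⟨β*⟩φ`, a prefixpoint of `⟨α⟩` because `⟨α⟩ ≤ ⟨β⟩`. -/
lemma star (h : GameLE α β) : GameLE (.star α) (.star β) := by
  intro φ
  set T : ParForm := .dia (.star β) φ
  have unfold : HilbP (piff T (.or φ (.dia β T))) := HilbP.axStar
  have prefix_T : HilbP (pimp (.dia α T) T) :=
    ((h T).and_intro unfold).of_entails fun v h => by simp_all [peval]
  have base : HilbP (pimp φ T) := unfold.of_entails fun v h => by simp_all [peval]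
  exact ((HilbP.mon (.star α) base).and_intro (HilbP.barInd prefix_T)).of_entails
    fun v h => by simp_all

lemma test {φ ψ : ParForm} (h : HilbP (pimp φ ψ)) : GameLE (.test φ) (.test ψ) := fun χ =>
  ((HilbP.axTest (ψ := φ) (φ := χ)).and_intro <| h.and_intro
    (HilbP.axTest (ψ := ψ) (φ := χ))).of_entails fun v h => by simp_all

end GameLE

def GameEquiv (α β : ParGame) : Prop := GameLE α β ∧ GameLE β α

namespace GameEquiv

variable {α β γ α' β' : ParGame}

lemma of_iff (h : ∀ φ, HilbP (piff (.dia α φ) (.dia β φ))) : GameEquiv α β :=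
  ⟨fun φ => (h φ).piff_mp, fun φ => (h φ).piff_mpr⟩

lemma dia_iff (h : GameEquiv α β) (φ : ParForm) : HilbP (piff (.dia α φ) (.dia β φ)) :=
  ((h.1 φ).and_intro (h.2 φ)).of_entails fun v h => by simpa [iff_def] using h

lemma refl (α : ParGame) : GameEquiv α α := ⟨.refl α, .refl α⟩

lemma symm (h : GameEquiv α β) : GameEquiv β α := ⟨h.2, h.1⟩

lemma trans (h₁ : GameEquiv α β) (h₂ : GameEquiv β γ) : GameEquiv α γ :=
  ⟨h₁.1.trans h₂.1, h₂.2.trans h₁.2⟩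

lemma comp (h : GameEquiv α β) (h' : GameEquiv α' β') : GameEquiv (.comp α α') (.comp β β') :=
  ⟨h.1.comp h'.1, h.2.comp h'.2⟩

lemma cha (h : GameEquiv α β) (h' : GameEquiv α' β') : GameEquiv (.cha α α') (.cha β β') :=
  ⟨h.1.cha h'.1, h.2.cha h'.2⟩

lemma dual (h : GameEquiv α β) : GameEquiv (.dual α) (.dual β) := ⟨h.2.dual, h.1.dual⟩

lemma star (h : GameEquiv α β) : GameEquiv (.star α) (.star β) := ⟨h.1.star, h.2.star⟩

lemma test {φ ψ : ParForm} (h : HilbP (piff φ ψ)) : GameEquiv (.test φ) (.test ψ) :=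
  ⟨.test h.piff_mp, .test h.piff_mpr⟩

lemma dual_dual (α : ParGame) : GameEquiv α (.dual (.dual α)) := .of_iff fun φ =>
  ((HilbP.axDual (γ := .dual α) (φ := φ)).and_intro <|
    (HilbP.axDual (γ := α) (φ := .neg φ)).and_intro (HilbP.dia_neg_neg α φ)).of_entails
      fun v h => by simp only [peval_pand, peval_piff, peval] at h ⊢; tauto

lemma dual_comp (α β : ParGame) : GameEquiv (.comp (.dual α) (.dual β)) (.dual (.comp α β)) := by
  refine .of_iff fun φ => ?_
  have inner : HilbP (piff (.dia α (.neg (.dia (.dual β) φ))) (.dia α (.dia β (.neg φ)))) :=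
    HilbP.dia_congr α <| (HilbP.axDual (γ := β) (φ := φ)).of_entails fun v h => by
      simp only [peval_piff, peval] at h ⊢; tauto
  exact ((HilbP.axComp (γ := .dual α) (δ := .dual β) (φ := φ)).and_intro <|
    (HilbP.axDual (γ := α) (φ := .dia (.dual β) φ)).and_intro <| inner.and_intro <|
    (HilbP.axDual (γ := .comp α β) (φ := φ)).and_intro
    (HilbP.axComp (γ := α) (δ := β) (φ := .neg φ))).of_entails fun v h => by
      simp only [peval_pand, peval_piff, peval] at h ⊢; tauto

end GameEquiv

mutual

theorem pariNF_compl_iff : ∀ φ : GLForm, HilbP (piff (pariNF φ.compl) (.neg (pariNF φ)))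
  | .atom _ => HilbP.taut fun v => by simp [GLForm.compl, pariNF, peval]
  | .natom _ => HilbP.taut fun v => by simp [GLForm.compl, pariNF, peval]
  | .or φ ψ => ((pariNF_compl_iff φ).and_intro (pariNF_compl_iff ψ)).of_entails fun v h => by
      simp only [GLForm.compl, pariNF, peval_pand, peval_piff, peval] at h ⊢; tauto
  | .and φ ψ => ((pariNF_compl_iff φ).and_intro (pariNF_compl_iff ψ)).of_entails fun v h => by
      simp only [GLForm.compl, pariNF, peval_pand, peval_piff, peval] at h ⊢; tauto
  | .dia γ φ => by
      have hφ : HilbP (piff (.neg (pariNF φ.compl)) (pariNF φ)) :=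
        (pariNF_compl_iff φ).of_entails fun v h => by simp_all [peval]
      exact (((pariNFG_dual_equiv γ).dia_iff (pariNF φ.compl)).and_intro <|
        (HilbP.axDual (γ := pariNFG γ) (φ := pariNF φ.compl)).and_intro
        (HilbP.dia_congr (pariNFG γ) hφ)).of_entails fun v h => by
          simp only [GLForm.compl, pariNF, peval_pand, peval_piff, peval] at h ⊢; tauto

theorem pariNFG_dual_equiv : ∀ γ : GLGame, GameEquiv (pariNFG γ.dual) (.dual (pariNFG γ))
  | .atg _ => .refl _
  | .atgd _ => .dual_dual _
  | .comp γ δ => ((pariNFG_dual_equiv γ).comp (pariNFG_dual_equiv δ)).trans (.dual_comp _ _)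
  | .cha γ δ => (((pariNFG_dual_equiv γ).dual.cha (pariNFG_dual_equiv δ).dual).trans
      ((GameEquiv.dual_dual _).symm.cha (GameEquiv.dual_dual _).symm)).dual
  | .chd γ δ => ((pariNFG_dual_equiv γ).cha (pariNFG_dual_equiv δ)).trans (.dual_dual _)
  | .star γ => ((pariNFG_dual_equiv γ).dual.trans (GameEquiv.dual_dual _).symm).star.dual
  | .cross γ => (pariNFG_dual_equiv γ).star.trans (.dual_dual _)
  | .test φ => (GameEquiv.test <| (pariNF_compl_iff φ).of_entails fun v h => by
      simp_all [peval]).dual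
  | .dtest φ => (GameEquiv.test (pariNF_compl_iff φ)).trans (.dual_dual _)

end

/-- The images under `pari` of `γ ⊓ δ`, `γ×` and `φ!`. -/
abbrev ParGame.chd (α β : ParGame) : ParGame := .dual (.cha (.dual α) (.dual β))

abbrev ParGame.cross (α : ParGame) : ParGame := .dual (.star (.dual α))

abbrev ParGame.dtest (φ : ParForm) : ParGame := .dual (.test (.neg φ))

namespace HilbP

lemma dia_or_dia_dual {α : ParGame} {φ ψ : ParForm} (h : HilbP (.or φ ψ)) :
    HilbP (.or (.dia α φ) (.dia (.dual α) ψ)) := by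
  have hmon : HilbP (pimp (.dia α (.neg ψ)) (.dia α φ)) :=
    mon α (h.of_entails fun v h => by simp only [peval_pimp, peval] at h ⊢; tauto)
  exact (hmon.and_intro (axDual (γ := α) (φ := ψ))).of_entails fun v h => by
    simp only [peval_pand, peval_pimp, peval_piff, peval] at h ⊢; tauto

lemma dia_dtest_iff (A χ : ParForm) : HilbP (piff (.dia (.dtest A) χ) (.or A χ)) :=
  ((axDual (γ := .test (.neg A)) (φ := χ)).and_intro
    (axTest (ψ := .neg A) (φ := .neg χ))).of_entails fun v h => by
      simp only [peval_pand, peval_piff, peval] at h ⊢; tauto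

lemma imp_dia_dtest (A χ : ParForm) : HilbP (pimp χ (.dia (.dtest A) χ)) :=
  (dia_dtest_iff A χ).of_entails fun v h => by
    simp only [peval_piff, peval_pimp, peval] at h ⊢; tauto

lemma dia_chd_iff (α β : ParGame) (χ : ParForm) :
    HilbP (piff (.dia (α.chd β) χ) (pand (.dia α χ) (.dia β χ))) :=
  ((axDual (γ := .cha (.dual α) (.dual β)) (φ := χ)).and_intro <|
    (axCha (γ := .dual α) (δ := .dual β) (φ := .neg χ)).and_intro <|
    (axDual (γ := α) (φ := .neg χ)).and_intro <| (axDual (γ := β) (φ := .neg χ)).and_intro <|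
    (dia_neg_neg α χ).and_intro (dia_neg_neg β χ)).of_entails fun v h => by
      simp only [peval_pand, peval_piff, peval] at h ⊢; tauto

lemma dia_cross_iff (α : ParGame) (χ : ParForm) :
    HilbP (piff (.dia α.cross χ) (pand χ (.dia α (.dia α.cross χ)))) := by
  have dual_star : HilbP (piff (.dia α.cross χ) (.neg (.dia (.star (.dual α)) (.neg χ)))) := axDual
  have inner : HilbP (piff (.dia α (.neg (.dia (.star (.dual α)) (.neg χ))))
      (.dia α (.dia α.cross χ))) :=
    dia_congr α (dual_star.of_entails fun v h => by simp_all)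
  exact (dual_star.and_intro <| (axStar (γ := .dual α) (φ := .neg χ)).and_intro <|
    (axDual (γ := α) (φ := .dia (.star (.dual α)) (.neg χ))).and_intro inner).of_entails
      fun v h => by simp only [peval_pand, peval_piff, peval] at h ⊢; tauto

/-- Bar induction for `(α^d)*`, applied to `¬R`. -/
lemma cross_coinduction {α : ParGame} {R φ : ParForm} (h : HilbP (pimp R (pand φ (.dia α R)))) :
    HilbP (pimp R (.dia α.cross φ)) := by
  have prefix_negR : HilbP (pimp (.dia (.dual α) (.neg R)) (.neg R)) :=
    (h.and_intro <| (axDual (γ := α) (φ := .neg R)).and_intro (dia_neg_neg α R)).of_entails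
      fun v h => by simp only [peval_pand, peval_pimp, peval_piff, peval] at h ⊢; tauto
  have negφ_negR : HilbP (pimp (.neg φ) (.neg R)) :=
    h.of_entails fun v h => by simp only [peval_pand, peval_pimp, peval] at h ⊢; tauto
  exact ((barInd prefix_negR).and_intro <| (mon (.star (.dual α)) negφ_negR).and_intro
    (axDual (γ := .star (.dual α)) (φ := φ))).of_entails fun v h => by
      simp only [peval_pand, peval_pimp, peval_piff, peval] at h ⊢; tauto

/-- With `A = pari(Φ̄)` this is the soundness of strengthened induction: `A ∨ ⟨(A! ; α)×⟩⟨A!⟩φ`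
is a postfixpoint of `φ ∧ ⟨α⟩(-)`. -/
lemma strengthened_induction {A φ : ParForm} {α : ParGame}
    (h : HilbP (pimp A
      (pand φ (.dia α (.dia (ParGame.comp (.dtest A) α).cross (.dia (.dtest A) φ)))))) :
    HilbP (pimp A (.dia α.cross φ)) := by
  set C : ParForm := .dia (ParGame.comp (.dtest A) α).cross (.dia (.dtest A) φ)
  have unfold_C : HilbP (pimp C (pand (.or A φ) (.or A (.dia α C)))) :=
    ((dia_cross_iff (ParGame.comp (.dtest A) α) (.dia (.dtest A) φ)).and_intro <|
      (dia_dtest_iff A φ).and_intro <| (axComp (γ := .dtest A) (δ := α) (φ := C)).and_intro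
      (dia_dtest_iff A (.dia α C))).of_entails fun v h => by
        simp only [peval_pand, peval_pimp, peval_piff, peval] at h ⊢; tauto
  have mon_C : HilbP (pimp (.dia α C) (.dia α (.or A C))) :=
    mon α (taut fun v => by simp only [peval_pimp, peval]; tauto)
  have post : HilbP (pimp (.or A C) (pand φ (.dia α (.or A C)))) :=
    (h.and_intro <| unfold_C.and_intro mon_C).of_entails fun v h => by
      simp only [peval_pand, peval_pimp, peval] at h ⊢; tauto
  exact (cross_coinduction post).of_entails fun v h => by
    simp only [peval_pimp, peval] at h ⊢; tauto

end HilbP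

lemma GameLE.le_dtest_comp (A : ParForm) (α : ParGame) : GameLE α (.comp (.dtest A) α) := fun φ =>
  ((HilbP.imp_dia_dtest A (.dia α φ)).and_intro
    (HilbP.axComp (γ := .dtest A) (δ := α) (φ := φ))).of_entails fun v h => by simp_all

mutual

theorem FCtxF.pariNF_fill_mono : ∀ (c : FCtxF) {φ ψ : GLForm},
    HilbP (pimp (pariNF φ) (pariNF ψ)) → HilbP (pimp (pariNF (c.fill φ)) (pariNF (c.fill ψ)))
  | .hole, _, _, h => h
  | .orL c _, _, _, h | .orR _ c, _, _, h | .andL c _, _, _, h | .andR _ c, _, _, h =>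
      (c.pariNF_fill_mono h).of_entails fun v h => by
        simp only [FCtxF.fill, pariNF, peval_pimp, peval] at h ⊢; tauto
  | .diaG c χ, _, _, h => c.pariNFG_fill_mono h (pariNF χ)
  | .diaF γ c, _, _, h => HilbP.mon (pariNFG γ) (c.pariNF_fill_mono h)

theorem GCtxF.pariNFG_fill_mono : ∀ (c : GCtxF) {φ ψ : GLForm},
    HilbP (pimp (pariNF φ) (pariNF ψ)) → GameLE (pariNFG (c.fill φ)) (pariNFG (c.fill ψ))
  | .compL c _, _, _, h => (c.pariNFG_fill_mono h).comp (.refl _)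
  | .compR _ c, _, _, h => (GameLE.refl _).comp (c.pariNFG_fill_mono h)
  | .chaL c _, _, _, h => (c.pariNFG_fill_mono h).cha (.refl _)
  | .chaR _ c, _, _, h => (GameLE.refl _).cha (c.pariNFG_fill_mono h)
  | .chdL c _, _, _, h => ((c.pariNFG_fill_mono h).dual.cha (.refl _)).dual
  | .chdR _ c, _, _, h => ((GameLE.refl _).cha (c.pariNFG_fill_mono h).dual).dual
  | .star c, _, _, h => (c.pariNFG_fill_mono h).star
  | .cross c, _, _, h => (c.pariNFG_fill_mono h).dual.star.dual
  | .test c, _, _, h => .test (c.pariNF_fill_mono h)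
  | .dtest c, _, _, h => GameLE.dual <| .test <| (c.pariNF_fill_mono h).of_entails fun v h => by
      simp only [peval_pimp, peval] at h ⊢; tauto

end

mutual

theorem FCtxG.pariNF_fillG_mono : ∀ (c : FCtxG) {γ δ : GLGame},
    GameLE (pariNFG γ) (pariNFG δ) → HilbP (pimp (pariNF (c.fillG γ)) (pariNF (c.fillG δ)))
  | .orL c _, _, _, h | .orR _ c, _, _, h | .andL c _, _, _, h | .andR _ c, _, _, h =>
      (c.pariNF_fillG_mono h).of_entails fun v h => by
        simp only [FCtxG.fillG, pariNF, peval_pimp, peval] at h ⊢; tauto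
  | .diaG c χ, _, _, h => c.pariNFG_fillG_mono h (pariNF χ)
  | .diaF γ c, _, _, h => HilbP.mon (pariNFG γ) (c.pariNF_fillG_mono h)

theorem GCtxG.pariNFG_fillG_mono : ∀ (c : GCtxG) {γ δ : GLGame},
    GameLE (pariNFG γ) (pariNFG δ) → GameLE (pariNFG (c.fillG γ)) (pariNFG (c.fillG δ))
  | .hole, _, _, h => h
  | .compL c _, _, _, h => (c.pariNFG_fillG_mono h).comp (.refl _)
  | .compR _ c, _, _, h => (GameLE.refl _).comp (c.pariNFG_fillG_mono h)
  | .chaL c _, _, _, h => (c.pariNFG_fillG_mono h).cha (.refl _)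
  | .chaR _ c, _, _, h => (GameLE.refl _).cha (c.pariNFG_fillG_mono h)
  | .chdL c _, _, _, h => ((c.pariNFG_fillG_mono h).dual.cha (.refl _)).dual
  | .chdR _ c, _, _, h => ((GameLE.refl _).cha (c.pariNFG_fillG_mono h).dual).dual
  | .star c, _, _, h => (c.pariNFG_fillG_mono h).star
  | .cross c, _, _, h => (c.pariNFG_fillG_mono h).dual.star.dual
  | .test c, _, _, h => .test (c.pariNF_fillG_mono h)
  | .dtest c, _, _, h => GameLE.dual <| .test <| (c.pariNF_fillG_mono h).of_entails fun v h => by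
      simp only [peval_pimp, peval] at h ⊢; tauto

end

def pfalse : ParForm := .neg (.or (.atom 0) (.neg (.atom 0)))

noncomputable def pariSeq (Φ : GLSeq) : ParForm := (Φ.toList.map pariNF).foldr .or pfalse

lemma peval_foldr_or (v : ParForm → Prop) (l : List ParForm) :
    peval v (l.foldr .or pfalse) ↔ ∃ φ ∈ l, peval v φ := by
  induction l with
  | nil => simp [pfalse, peval, em]
  | cons φ l ih => simp [peval, ih]

@[simp] lemma peval_pariSeq (v : ParForm → Prop) (Φ : GLSeq) :
    peval v (pariSeq Φ) ↔ ∃ φ ∈ Φ, peval v (pariNF φ) := by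
  simp [pariSeq, peval_foldr_or]

lemma pariNF_listAnd_compl_iff : ∀ l : List GLForm,
    HilbP (piff (pariNF (listAnd (l.map GLForm.compl))) (.neg ((l.map pariNF).foldr .or pfalse)))
  | [] => HilbP.taut fun v => by simp [listAnd, pfalse, pariNF, peval, em]
  | [φ] => (pariNF_compl_iff φ).of_entails fun v h => by
      simp only [listAnd, List.map, List.foldr, pfalse, peval_piff, peval] at h ⊢; tauto
  | φ :: ψ :: l => ((pariNF_compl_iff φ).and_intro (pariNF_listAnd_compl_iff (ψ :: l))).of_entails
      fun v h => by
        simp only [listAnd, List.map, List.foldr, pariNF, peval_pand, peval_piff, peval] at h ⊢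
        tauto

lemma pariNF_seqCompl_iff (Φ : GLSeq) : HilbP (piff (pariNF (seqCompl Φ)) (.neg (pariSeq Φ))) :=
  pariNF_listAnd_compl_iff Φ.toList

lemma hilbP_pariSeq_insert_of_imp {Φ : GLSeq} {φ ψ : GLForm} (h : HilbP (pariSeq (insert φ Φ)))
    (hφψ : HilbP (pimp (pariNF φ) (pariNF ψ))) : HilbP (pariSeq (insert ψ Φ)) :=
  (h.and_intro hφψ).of_entails fun v h => by
    simp only [peval_pand, peval_pimp, peval_pariSeq, Finset.exists_mem_insert] at h ⊢
    tauto

lemma hilbP_pariSeq_insert_iff {Φ : GLSeq} {φ : GLForm} :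
    HilbP (pariSeq (insert φ Φ)) ↔ HilbP (pimp (pariNF (seqCompl Φ)) (pariNF φ)) := by
  have hcompl := pariNF_seqCompl_iff Φ
  constructor
  · intro h
    refine (h.and_intro hcompl).of_entails fun v h => ?_
    simp only [peval_pand, peval_piff, peval_pimp, peval_pariSeq, Finset.exists_mem_insert,
      peval] at h ⊢
    exact fun hA => h.1.resolve_right (h.2.1 hA)
  · intro h
    refine (h.and_intro hcompl).of_entails fun v h => ?_
    simp only [peval_pand, peval_piff, peval_pimp, peval_pariSeq, Finset.exists_mem_insert,
      peval] at h ⊢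
    exact or_iff_not_imp_right.2 fun hS => h.1 (h.2.2 hS)

theorem GDer.hilbP_pariSeq {Φ : GLSeq} (h : GDer Φ) : HilbP (pariSeq Φ) := by
  induction h with
  | ax Φ => exact hilbP_pariSeq_insert_iff.2 (HilbP.taut fun v => peval_pimp.2 id)
  | weak φ _ ih =>
    refine ih.of_entails fun v h => ?_
    simp only [peval_pariSeq, Finset.exists_mem_insert] at h ⊢; tauto
  | @modm φ ψ g _ ih =>
    have h : HilbP (.or (pariNF φ) (pariNF ψ)) := ih.of_entails fun v h => by simpa [peval] using h
    refine (HilbP.dia_or_dia_dual (α := .atg g) h).of_entails fun v h => ?_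
    simpa [peval, pariNF, pariNFG] using h
  | orR _ ih =>
    refine ih.of_entails fun v h => ?_
    simp only [peval_pariSeq, Finset.exists_mem_insert, pariNF, peval] at h ⊢; tauto
  | andR _ _ ih₁ ih₂ =>
    refine (ih₁.and_intro ih₂).of_entails fun v h => ?_
    simp only [peval_pand, peval_pariSeq, Finset.exists_mem_insert, pariNF, peval] at h ⊢; tauto
  | starR _ ih => exact hilbP_pariSeq_insert_of_imp ih HilbP.axStar.piff_mpr
  | crossR _ ih => exact hilbP_pariSeq_insert_of_imp ih (HilbP.dia_cross_iff _ _).piff_mpr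
  | chaR _ ih => exact hilbP_pariSeq_insert_of_imp ih HilbP.axCha.piff_mpr
  | chdR _ ih => exact hilbP_pariSeq_insert_of_imp ih (HilbP.dia_chd_iff _ _ _).piff_mpr
  | testR _ ih => exact hilbP_pariSeq_insert_of_imp ih HilbP.axTest.piff_mpr
  | dtestR _ ih => exact hilbP_pariSeq_insert_of_imp ih (HilbP.dia_dtest_iff _ _).piff_mpr
  | monGd c _ ih => exact hilbP_pariSeq_insert_of_imp ih (c.pariNF_fillG_mono (.le_dtest_comp _ _))
  | monFd c _ ih =>
    exact hilbP_pariSeq_insert_of_imp ih (c.pariNF_fill_mono (HilbP.imp_dia_dtest _ _))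
  | compd c _ ih => exact hilbP_pariSeq_insert_of_imp ih (c.pariNF_fill_mono HilbP.axComp.piff_mpr)
  | inds _ ih => exact hilbP_pariSeq_insert_iff.2 <|
      HilbP.strengthened_induction (hilbP_pariSeq_insert_iff.1 ih)

/-- For every `ξ ∈ L_NF`, if `G ⊢ ξ` then `HilbP ⊢ pari(ξ)`, where
    `pari` replaces demonic operations by duals of angelic ones. -/
theorem G_to_HilbP_pari (ξ : GLForm) :
    GDer {ξ} → HilbP (pariNF ξ) := fun h =>
  h.hilbP_pariSeq.of_entails fun v h => by simpa using h
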